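/- The coefficient of x^{n} in x^2*M(x)^3 equals m_{n+2} - 2*m_{n+1}, where M is the Motzkin generating function. -/

import Mathlib

/-!
Let `M` be the power series of the numbers defined by the convolution recurrence
`m (n + 2) = m (n + 1) + ∑_{i + j = n} m i * m j`, so that `M = 1 + X M + X² M²`.
Splitting off the first step, the number of paths of length `n` from height `h` satisfies the
same recurrences in `(n, h)` as the coefficient of `Xⁿ` in `X^h M^(h+1)`, hence equals it; at
`h = 0` this identifies `motzkin` with `m`. The functional equation then gives
`X⁴ M³ = M - 1 + X - 2 X M`, and the claim is its coefficient of `X^(n+2)`.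
-/

/-- Paths with steps (1,1),(1,-1),(1,0) encoded by their height increments,
starting at height `h`, staying weakly above the x-axis and ending at height 0. -/
noncomputable def latticeCount (len : ℕ) (h : ℕ) : ℕ :=
  Nat.card {l : List ℤ // l.length = len ∧ (∀ x ∈ l, x = 1 ∨ x = -1 ∨ x = 0) ∧
    (∀ m, 0 ≤ (h : ℤ) + (l.take m).sum) ∧ (h : ℤ) + l.sum = 0}

/-- The `n`-th Motzkin number, as the number of Motzkin paths of length `n`. -/
noncomputable def motzkin (n : ℕ) : ℕ := latticeCount n 0

open PowerSeries Finset

def motzkinRec : ℕ → ℕ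
  | 0 => 1
  | 1 => 1
  | n + 2 => motzkinRec (n + 1) + ∑ i : Fin (n + 1), motzkinRec i * motzkinRec (n - i)

theorem motzkinRec_add_two (n : ℕ) :
    motzkinRec (n + 2) =
      motzkinRec (n + 1) + ∑ ij ∈ antidiagonal n, motzkinRec ij.1 * motzkinRec ij.2 := by
  rw [motzkinRec, Nat.sum_antidiagonal_eq_sum_range_succ (fun x y => motzkinRec x * motzkinRec y),
    sum_range]

def motzkinSeries (R : Type*) [CommSemiring R] : R⟦X⟧ := mk fun n => (motzkinRec n : R)

theorem motzkinSeries_eq (R : Type*) [CommSemiring R] :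
    motzkinSeries R = 1 + X * motzkinSeries R + X ^ 2 * motzkinSeries R ^ 2 := by
  ext (_ | _ | n)
  · simp [motzkinSeries, motzkinRec]
  · simp [motzkinSeries, motzkinRec, coeff_X_pow_mul']
  · rw [map_add, map_add, coeff_X_pow_mul', coeff_succ_X_mul, sq, coeff_mul]
    simp [motzkinSeries, motzkinRec_add_two, coeff_one]

section MotzkinEquation

variable {R : Type*} [CommSemiring R] {M : R⟦X⟧}

theorem eq_one_add_X_mul_of_motzkin_eq (hM : M = 1 + X * M + X ^ 2 * M ^ 2) :
    M = 1 + X * (X * M ^ 2 + M) := by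
  nth_rewrite 1 [hM]
  ring

theorem X_pow_mul_pow_eq_of_motzkin_eq (hM : M = 1 + X * M + X ^ 2 * M ^ 2) (h : ℕ) :
    X ^ (h + 1) * M ^ (h + 2) =
      X * (X ^ (h + 2) * M ^ (h + 3) + X ^ h * M ^ (h + 1) + X ^ (h + 1) * M ^ (h + 2)) :=
  calc X ^ (h + 1) * M ^ (h + 2) = X ^ (h + 1) * M ^ (h + 1) * M := by ring
    _ = X ^ (h + 1) * M ^ (h + 1) * (1 + X * M + X ^ 2 * M ^ 2) := by rw [← hM]
    _ = _ := by ring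

end MotzkinEquation

theorem X_pow_four_mul_pow_three_of_motzkin_eq {R : Type*} [CommRing R] {M : R⟦X⟧}
    (hM : M = 1 + X * M + X ^ 2 * M ^ 2) : X ^ 4 * M ^ 3 = M - 1 + X - 2 * X * M := by
  linear_combination (X - 1 - X ^ 2 * M) * hM

/-- The paths counted by `latticeCount`, with the starting height allowed to be any integer, so
that a down-step from height `0` leads to the empty set of continuations. -/
def motzkinPaths (n : ℕ) (h : ℤ) : Set (List ℤ) :=
  {l | l.length = n ∧ (∀ x ∈ l, x = 1 ∨ x = -1 ∨ x = 0) ∧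
    (∀ m, 0 ≤ h + (l.take m).sum) ∧ h + l.sum = 0}

theorem latticeCount_eq_ncard (n h : ℕ) : latticeCount n h = (motzkinPaths n h).ncard :=
  Nat.card_coe_set_eq _

theorem motzkinPaths_zero (h : ℤ) : motzkinPaths 0 h = if h = 0 then {[]} else ∅ := by
  ext (_ | ⟨a, t⟩) <;> split_ifs with hh <;> simp [motzkinPaths, hh]

theorem motzkinPaths_of_neg {n : ℕ} {h : ℤ} (hh : h < 0) : motzkinPaths n h = ∅ :=
  Set.eq_empty_of_forall_notMem fun l hl => (hl.2.2.1 0).not_gt (by simpa using hh)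

theorem cons_mem_motzkinPaths {n : ℕ} {h a : ℤ} {t : List ℤ} :
    a :: t ∈ motzkinPaths (n + 1) h ↔
      (a = 1 ∨ a = -1 ∨ a = 0) ∧ 0 ≤ h ∧ t ∈ motzkinPaths n (h + a) := by
  simp only [motzkinPaths, Set.mem_ofPred_eq, List.length_cons, List.forall_mem_cons,
    List.sum_cons, add_left_inj, ← add_assoc]
  constructor
  · rintro ⟨hlen, ⟨ha, ht⟩, hprefix, hsum⟩
    refine ⟨ha, by simpa using hprefix 0, hlen, ht, fun m => ?_, hsum⟩
    simpa [add_assoc] using hprefix (m + 1)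
  · rintro ⟨ha, hh, hlen, ht, hprefix, hsum⟩
    refine ⟨hlen, ⟨ha, ht⟩, fun m => ?_, hsum⟩
    cases m with
    | zero => simpa using hh
    | succ m => simpa [add_assoc] using hprefix m

theorem motzkinPaths_succ {n : ℕ} {h : ℤ} (hh : 0 ≤ h) :
    motzkinPaths (n + 1) h = List.cons 1 '' motzkinPaths n (h + 1) ∪
      List.cons (-1) '' motzkinPaths n (h - 1) ∪ List.cons 0 '' motzkinPaths n h := by
  ext (_ | ⟨a, t⟩)
  · simp [motzkinPaths]
  · simp only [cons_mem_motzkinPaths, Set.mem_union, Set.mem_image, List.cons.injEq]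
    aesop

theorem motzkinPaths_finite (n : ℕ) (h : ℤ) : (motzkinPaths n h).Finite := by
  induction n generalizing h with
  | zero => rw [motzkinPaths_zero]; split_ifs <;> simp
  | succ n ih =>
    rcases lt_or_ge h 0 with hh | hh
    · simp [motzkinPaths_of_neg hh]
    · rw [motzkinPaths_succ hh]
      exact (((ih _).image _).union ((ih _).image _)).union ((ih _).image _)

instance (n : ℕ) (h : ℤ) : Finite (motzkinPaths n h) := (motzkinPaths_finite n h).to_subtype

theorem disjoint_image_cons {α : Type*} {a b : α} (hab : a ≠ b) (S T : Set (List α)) :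
    Disjoint (List.cons a '' S) (List.cons b '' T) := by
  rw [Set.disjoint_left]
  rintro _ ⟨s, -, rfl⟩ ⟨t, -, hts⟩
  exact hab (List.cons_eq_cons.mp hts).1.symm

theorem ncard_motzkinPaths_succ {n : ℕ} {h : ℤ} (hh : 0 ≤ h) :
    (motzkinPaths (n + 1) h).ncard = (motzkinPaths n (h + 1)).ncard +
      (motzkinPaths n (h - 1)).ncard + (motzkinPaths n h).ncard := by
  rw [motzkinPaths_succ hh, Set.ncard_union_eq, Set.ncard_union_eq,
    Set.ncard_image_of_injective _ List.cons_injective,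
    Set.ncard_image_of_injective _ List.cons_injective,
    Set.ncard_image_of_injective _ List.cons_injective]
  · exact disjoint_image_cons (by norm_num) _ _
  · exact Set.disjoint_union_left.mpr
      ⟨disjoint_image_cons (by norm_num) _ _, disjoint_image_cons (by norm_num) _ _⟩

theorem ncard_motzkinPaths (n h : ℕ) :
    (motzkinPaths n h).ncard = coeff n (X ^ h * motzkinSeries ℕ ^ (h + 1)) := by
  induction n generalizing h with
  | zero =>
    rw [motzkinPaths_zero]
    rcases h with _ | h
    · simp [motzkinSeries, motzkinRec]
    · simp [if_neg (by omega : (h : ℤ) + 1 ≠ 0)]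
  | succ n ih =>
    rw [ncard_motzkinPaths_succ (Int.natCast_nonneg h)]
    rcases h with _ | h
    · have h1 : (motzkinPaths n 1).ncard = coeff n (X * motzkinSeries ℕ ^ 2) := by
        simpa using ih 1
      have h0 : (motzkinPaths n 0).ncard = coeff n (motzkinSeries ℕ) := by simpa using ih 0
      rw [Nat.cast_zero, zero_add, zero_sub, motzkinPaths_of_neg neg_one_lt_zero, Set.ncard_empty,
        add_zero, h1, h0, pow_zero, one_mul, zero_add, pow_one]
      conv_rhs => rw [eq_one_add_X_mul_of_motzkin_eq (motzkinSeries_eq ℕ)]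
      simp [coeff_succ_X_mul]
    · rw [show ((h + 1 : ℕ) : ℤ) + 1 = (h + 2 : ℕ) by push_cast; ring,
        show ((h + 1 : ℕ) : ℤ) - 1 = h by push_cast; ring, ih, ih, ih]
      conv_rhs => rw [X_pow_mul_pow_eq_of_motzkin_eq (motzkinSeries_eq ℕ) h]
      rw [coeff_succ_X_mul, map_add, map_add]

theorem motzkin_eq_motzkinRec (n : ℕ) : motzkin n = motzkinRec n := by
  simpa [motzkin, motzkinSeries] using (latticeCount_eq_ncard n 0).trans (ncard_motzkinPaths n 0)

open PowerSeries in
/-- The coefficient of `x^n` in `x² M(x)³` is `m_{n+2} - 2 m_{n+1}`. -/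
theorem coeff_x2M3 (n : ℕ) :
    PowerSeries.coeff (R := ℤ) n (X ^ 2 * (PowerSeries.mk fun m => (motzkin m : ℤ)) ^ 3) =
      (motzkin (n + 2) : ℤ) - 2 * motzkin (n + 1) := by
  have hM : (mk fun m => (motzkin m : ℤ)) = motzkinSeries ℤ := by
    ext m
    simp [motzkinSeries, motzkin_eq_motzkinRec]
  rw [hM, ← coeff_X_pow_mul _ 2 n, ← mul_assoc, ← pow_add,
    X_pow_four_mul_pow_three_of_motzkin_eq (motzkinSeries_eq ℤ)]
  simp [motzkinSeries, motzkin_eq_motzkinRec, coeff_X, coeff_one, two_mul, add_mul]
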